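/- Let K be a unital (possibly non-commutative) ring and let T be the ring of polynomials in k commuting indeterminates over K, realized as the additive monoid algebra of K over the additive monoid (Fin k →₀ ℕ). Let A be a right ideal of T whose right annihilator A^r = { t ∈ T | ∀ a ∈ A, a * t = 0 } is non-trivial (contains a non-zero element). Then there exists a non-zero constant c ∈ K (i.e. a non-zero scalar multiple of the monomial of exponent 0) such that a * c = 0 for every a ∈ A. -/

import Mathlib

/-!
Among the nonzero elements of the right annihilator of `A`, choose `g` with the fewest monomials,
and let `d` be its largest monomial for the lexicographic order. If some `a ∈ A` had a coefficient
`a_s` with `a_s g ≠ 0`, take the largest such `s = j`: the coefficient of `a g = 0` at `j + d` is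
then `a_j g_d`, so `a_j g` is a nonzero element of the annihilator (as `A` is a right ideal) with
fewer monomials than `g`. Hence `a_s g = 0` for every coefficient of every `a ∈ A`, so the
constant `c = g_d` works.
-/

open Finset

def rightAnnihilator {S : Type*} [Mul S] [Zero S] (I : Set S) : Set S :=
  {t | ∀ a ∈ I, a * t = 0}

namespace AddMonoidAlgebra

variable {R A B : Type*} [Semiring R]

theorem mul_eq_zero_of_forall_single_zero_coeff_mul_eq_zero [AddZeroClass A] {q g : R[A]}
    (h : ∀ s, single 0 (q.coeff s) * g = 0) : q * g = 0 := by
  classical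
  ext m
  simp only [coeff_mul, coeff_zero, Finsupp.coe_zero, Pi.zero_apply]
  refine Finset.sum_eq_zero fun s _ => Finset.sum_eq_zero fun l _ => ?_
  have hsl : q.coeff s * g.coeff l = 0 := by
    rw [← coeff_single_zero_mul, h, coeff_zero, Finsupp.zero_apply]
  simp only [hsl, ite_self]

theorem card_support_single_zero_mul_lt [AddZeroClass A] {r : R} {g : R[A]} {d : A}
    (hd : d ∈ g.coeff.support) (hrd : r * g.coeff d = 0) :
    #(single 0 r * g).coeff.support < #g.coeff.support := by
  refine card_lt_card ((ssubset_iff_of_subset fun l hl => ?_).2 ⟨d, hd, ?_⟩)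
  · rw [Finsupp.mem_support_iff, coeff_single_zero_mul] at hl
    exact Finsupp.mem_support_iff.2 (right_ne_zero_of_mul hl)
  · rw [Finsupp.notMem_support_iff, coeff_single_zero_mul, hrd]

variable [AddCommMonoid B] [LinearOrder B] [IsOrderedCancelAddMonoid B] {D : A → B}

theorem uniqueAdd_of_forall_le [Add A] (hD : D.Injective)
    (hadd : ∀ a₁ a₂, D (a₁ + a₂) = D a₁ + D a₂)
    {S T : Finset A} {j d : A} (hS : ∀ s ∈ S, D s ≤ D j) (hT : ∀ l ∈ T, D l ≤ D d) :
    UniqueAdd S T j d := by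
  intro s l hs hl hsum
  have hD_sum : D s + D l = D j + D d := by rw [← hadd, ← hadd, hsum]
  have hsj : D s = D j := (hS s hs).eq_of_not_lt fun h =>
    (add_lt_add_of_lt_of_le h (hT l hl)).ne hD_sum
  have hld : D l = D d := (hT l hl).eq_of_not_lt fun h =>
    (add_lt_add_of_le_of_lt (hS s hs) h).ne hD_sum
  exact ⟨hD hsj, hD hld⟩

theorem coeff_mul_add_of_forall_lt [AddZeroClass A] (hD : D.Injective)
    (hadd : ∀ a₁ a₂, D (a₁ + a₂) = D a₁ + D a₂)
    {a g : R[A]} {j d : A} (hg : ∀ l ∈ g.coeff.support, D l ≤ D d)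
    (ha : ∀ s, D j < D s → single 0 (a.coeff s) * g = 0) :
    (a * g).coeff (j + d) = a.coeff j * g.coeff d := by
  let p : R[A] := ofCoeff (a.coeff.filter fun s => D s ≤ D j)
  let q : R[A] := ofCoeff (a.coeff.filter fun s => ¬D s ≤ D j)
  have hpq : a = p + q := ext (Finsupp.filter_add_filter_not _ _).symm
  have hqg : q * g = 0 := mul_eq_zero_of_forall_single_zero_coeff_mul_eq_zero fun s => by
    by_cases hs : D s ≤ D j
    · rw [coeff_ofCoeff, Finsupp.filter_apply_neg (p := fun s => ¬D s ≤ D j) a.coeff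
        (not_not.2 hs), single_zero, zero_mul]
    · rw [coeff_ofCoeff, Finsupp.filter_apply_pos (p := fun s => ¬D s ≤ D j) a.coeff hs]
      exact ha s (not_le.1 hs)
  have hp : ∀ s ∈ p.coeff.support, D s ≤ D j := fun s hs => by
    rw [coeff_ofCoeff, Finsupp.support_filter, mem_filter] at hs
    exact hs.2
  calc (a * g).coeff (j + d) = (p * g).coeff (j + d) := by rw [hpq, add_mul, hqg, add_zero]
    _ = p.coeff j * g.coeff d := coeff_mul_add_of_uniqueAdd (uniqueAdd_of_forall_le hD hadd hp hg)
    _ = a.coeff j * g.coeff d := by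
      rw [coeff_ofCoeff, Finsupp.filter_apply_pos (p := fun s => D s ≤ D j) a.coeff le_rfl]

theorem single_zero_coeff_mul_eq_zero_of_minimal [AddMonoid A] (hD : D.Injective)
    (hadd : ∀ a₁ a₂, D (a₁ + a₂) = D a₁ + D a₂) {I : Set R[A]} (hI : ∀ a ∈ I, ∀ t, a * t ∈ I)
    {g : R[A]} (hgI : g ∈ rightAnnihilator I)
    (hmin : ∀ t ∈ rightAnnihilator I, t ≠ 0 → #g.coeff.support ≤ #t.coeff.support)
    {d : A} (hd : d ∈ g.coeff.support) (hdmax : ∀ l ∈ g.coeff.support, D l ≤ D d)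
    {a : R[A]} (ha : a ∈ I) (s : A) : single 0 (a.coeff s) * g = 0 := by
  classical
  have mem_support {s} (h : single 0 (a.coeff s) * g ≠ 0) : s ∈ a.coeff.support :=
    Finsupp.mem_support_iff.2 fun h0 => h (by rw [h0, single_zero, zero_mul])
  by_contra hs
  let S := a.coeff.support.filter fun s => single 0 (a.coeff s) * g ≠ 0
  obtain ⟨j, hjS, hjmax⟩ := S.exists_max_image D ⟨s, mem_filter.2 ⟨mem_support hs, hs⟩⟩
  have hj : single 0 (a.coeff j) * g ≠ 0 := (mem_filter.1 hjS).2
  have hgt (s) (hjs : D j < D s) : single 0 (a.coeff s) * g = 0 := by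
    by_contra h
    exact (hjmax s (mem_filter.2 ⟨mem_support h, h⟩)).not_gt hjs
  have hjd : a.coeff j * g.coeff d = 0 := by
    rw [← coeff_mul_add_of_forall_lt hD hadd hdmax hgt, hgI a ha, coeff_zero, Finsupp.zero_apply]
  have hmem : single 0 (a.coeff j) * g ∈ rightAnnihilator I := fun b hb => by
    rw [← mul_assoc]
    exact hgI _ (hI b hb _)
  exact (hmin _ hmem hj).not_gt (card_support_single_zero_mul_lt hd hjd)

theorem exists_ne_zero_mul_single_zero_eq_zero [AddMonoid A] (hD : D.Injective)
    (hadd : ∀ a₁ a₂, D (a₁ + a₂) = D a₁ + D a₂) {I : Set R[A]} (hI : ∀ a ∈ I, ∀ t, a * t ∈ I)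
    (hann : ∃ t ≠ 0, t ∈ rightAnnihilator I) :
    ∃ c : R, c ≠ 0 ∧ ∀ a ∈ I, a * single 0 c = 0 := by
  obtain ⟨g, ⟨hg0, hgI⟩, hmin⟩ := (measure fun t : R[A] => #t.coeff.support).wf.has_min
    {t | t ≠ 0 ∧ t ∈ rightAnnihilator I} hann
  obtain ⟨d, hd, hdmax⟩ :=
    g.coeff.support.exists_max_image D (Finsupp.support_nonempty_iff.2 (coeff_eq_zero.not.2 hg0))
  refine ⟨g.coeff d, Finsupp.mem_support_iff.1 hd, fun a ha => ext (Finsupp.ext fun s => ?_)⟩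
  have hsg := single_zero_coeff_mul_eq_zero_of_minimal hD hadd hI hgI
    (fun t ht ht0 => not_lt.1 (hmin t ⟨ht0, ht⟩)) hd hdmax ha s
  rw [coeff_mul_single_zero, ← coeff_single_zero_mul, hsg]
  simp only [coeff_zero, Finsupp.coe_zero, Pi.zero_apply]

end AddMonoidAlgebra

theorem mccoy_right_ideal_addMonoidAlgebra {K : Type*} [Ring K] {k : ℕ}
    (A : AddSubgroup (AddMonoidAlgebra K (Fin k →₀ ℕ)))
    (hA : ∀ a ∈ A, ∀ t : AddMonoidAlgebra K (Fin k →₀ ℕ), a * t ∈ A)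
    (hann : ∃ t : AddMonoidAlgebra K (Fin k →₀ ℕ), t ≠ 0 ∧ ∀ a ∈ A, a * t = 0) :
    ∃ c : K, c ≠ 0 ∧ ∀ a ∈ A, a * AddMonoidAlgebra.single (0 : Fin k →₀ ℕ) c = 0 :=
  AddMonoidAlgebra.exists_ne_zero_mul_single_zero_eq_zero (I := SetLike.coe A)
    toLex.injective (fun _ _ => rfl) hA hann
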